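/- (Monotonicity of relative entropy under the Gibbs perturbation) Let σ be a full-rank density matrix, Π positive semidefinite, β > 0, and ρ* = exp(log σ − Π/β)/Tr(exp(log σ − Π/β)). Then Tr(Πρ*) ≤ Tr(Πσ). -/

import Mathlib

open Matrix ComplexOrder Kronecker
noncomputable section
variable {m n : Type*} [Fintype n] [DecidableEq n] [Fintype m] [DecidableEq m]

/-- Functional calculus for Hermitian matrices via the spectral theorem
(junk value `0` on non-Hermitian input). -/
def matFun (f : ℝ → ℝ) (A : Matrix n n ℂ) : Matrix n n ℂ :=
  if hA : A.IsHermitian then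
    (hA.eigenvectorUnitary : Matrix n n ℂ) *
      Matrix.diagonal (fun i => (f (hA.eigenvalues i) : ℂ)) *
      (star hA.eigenvectorUnitary : Matrix n n ℂ)
  else 0

/-- Matrix logarithm on the support (`Real.log 0 = 0` gives the `0 log 0 = 0` convention). -/
def matLog (A : Matrix n n ℂ) : Matrix n n ℂ := matFun Real.log A

/-- Matrix exponential (of a Hermitian matrix). -/
def matExp (A : Matrix n n ℂ) : Matrix n n ℂ := matFun Real.exp A

/-- A density matrix: positive semidefinite with trace one. -/
def IsDensity (ρ : Matrix n n ℂ) : Prop := ρ.PosSemidef ∧ ρ.trace = 1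

/-- Quantum relative entropy `S(ρ‖σ) = Tr (ρ (log ρ − log σ))`. -/
def qRelEnt (ρ σ : Matrix n n ℂ) : ℂ := (ρ * (matLog ρ - matLog σ)).trace

/-- `k`-fold tensor power of a matrix. -/
def tpow (ρ : Matrix n n ℂ) (k : ℕ) : Matrix (Fin k → n) (Fin k → n) ℂ :=
  Matrix.of fun i j => ∏ t, ρ (i t) (j t)

/-- Trace norm: the sum of singular values. -/
def traceNorm (A : Matrix n n ℂ) : ℝ :=
  ∑ i, Real.sqrt ((Matrix.posSemidef_conjTranspose_mul_self A).1.eigenvalues i)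

/-- Projection onto the strictly positive eigenspace of a Hermitian matrix. -/
def posProj (A : Matrix n n ℂ) : Matrix n n ℂ := matFun (fun x => if 0 < x then 1 else 0) A

/-- Positive part in the Jordan decomposition of a Hermitian matrix. -/
def posPart (A : Matrix n n ℂ) : Matrix n n ℂ := matFun (fun x => max x 0) A

/-- Projection onto the support of a Hermitian (e.g. PSD) matrix. -/
def suppProj (A : Matrix n n ℂ) : Matrix n n ℂ := matFun (fun x => if x = 0 then 0 else 1) A

/-!
Klein's inequality: for Hermitian `A`, `B` and `f` monotone on their spectra,
`Tr((A - B)(f A - f B)) = ∑ᵢⱼ (aᵢ - bⱼ)(f aᵢ - f bⱼ) |⟨uᵢ, vⱼ⟩|² ≥ 0`, where `aᵢ, uᵢ` and `bⱼ, vⱼ`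
are the eigen-decompositions. Take `f = log`, `A = σ` and `B = ρ* = exp H / Z` with
`H = log σ - Π/β`. Then `log σ - log ρ* = Π/β + log Z`, and the constant `log Z` contributes
nothing since `σ` and `ρ*` both have trace one, leaving `β⁻¹ Tr((σ - ρ*) Π) ≥ 0`.
-/

lemma matFun_eq_cfc (f : ℝ → ℝ) {A : Matrix n n ℂ} (hA : A.IsHermitian) :
    matFun f A = cfc f A := by
  rw [hA.cfc_eq, matFun, dif_pos hA, Matrix.IsHermitian.cfc]
  rfl

lemma isHermitian_matFun (f : ℝ → ℝ) (A : Matrix n n ℂ) : (matFun f A).IsHermitian := by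
  by_cases hA : A.IsHermitian
  · exact matFun_eq_cfc f hA ▸ cfc_predicate f A
  · simp [matFun, hA]

lemma Matrix.trace_diagonal_mul_mul_diagonal_mul_star (d e : n → ℂ) (W : Matrix n n ℂ) :
    (diagonal d * W * diagonal e * star W).trace
      = ∑ i, ∑ j, d i * e j * (Complex.normSq (W i j) : ℂ) := by
  have entry (i j : n) : (diagonal d * W * diagonal e) i j = d i * W i j * e j := by
    rw [mul_diagonal, diagonal_mul]
  simp only [trace, diag_apply, mul_apply, entry, star_apply, Complex.star_def,
    ← Complex.mul_conj]
  exact Finset.sum_congr rfl fun i _ => Finset.sum_congr rfl fun j _ => by ring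

namespace Matrix.IsHermitian

variable {A B : Matrix n n ℂ}

def overlap (hA : A.IsHermitian) (hB : B.IsHermitian) (i j : n) : ℝ :=
  Complex.normSq ((star (hA.eigenvectorUnitary : Matrix n n ℂ) * hB.eigenvectorUnitary) i j)

lemma trace_cfc (hA : A.IsHermitian) (f : ℝ → ℝ) :
    (cfc f A).trace = ((∑ i, f (hA.eigenvalues i) : ℝ) : ℂ) := by
  rw [hA.cfc_eq, IsHermitian.cfc, Unitary.conjStarAlgAut_apply, trace_mul_cycle,
    Unitary.star_mul_self_of_mem hA.eigenvectorUnitary.2, Matrix.one_mul, trace_diagonal]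
  push_cast
  rfl

lemma trace_cfc_mul_cfc (hA : A.IsHermitian) (hB : B.IsHermitian) (f g : ℝ → ℝ) :
    (cfc f A * cfc g B).trace
      = ∑ i, ∑ j, (f (hA.eigenvalues i) * g (hB.eigenvalues j) * hA.overlap hB i j : ℝ) := by
  set U : Matrix n n ℂ := ↑hA.eigenvectorUnitary
  set V : Matrix n n ℂ := ↑hB.eigenvectorUnitary
  have hU : star U * U = 1 := Unitary.star_mul_self_of_mem hA.eigenvectorUnitary.2
  have hU' : U * star U = 1 := Unitary.mul_star_self_of_mem hA.eigenvectorUnitary.2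
  rw [hA.cfc_eq, hB.cfc_eq, IsHermitian.cfc, IsHermitian.cfc, Unitary.conjStarAlgAut_apply,
    Unitary.conjStarAlgAut_apply]
  calc _ = (U * (diagonal (RCLike.ofReal ∘ f ∘ hA.eigenvalues) * (star U * V) *
        diagonal (RCLike.ofReal ∘ g ∘ hB.eigenvalues) * star (star U * V)) * star U).trace := by
        simp only [star_mul, star_star, Matrix.mul_assoc, hU', Matrix.mul_one]
        rfl
    _ = _ := by
        rw [trace_mul_cycle, ← Matrix.mul_assoc, hU, Matrix.one_mul,
          trace_diagonal_mul_mul_diagonal_mul_star]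
        push_cast
        rfl

lemma trace_sub_mul_cfc_sub_nonneg (hA : A.IsHermitian) (hB : B.IsHermitian) {f : ℝ → ℝ}
    {s : Set ℝ} (hf : MonotoneOn f s) (hAs : spectrum ℝ A ⊆ s) (hBs : spectrum ℝ B ⊆ s) :
    0 ≤ ((A - B) * (cfc f A - cfc f B)).trace := by
  -- Inserting `1 = cfc 1` makes all four terms products `cfc φ A * cfc ψ B`, so that they
  -- expand against the same overlap weights.
  have expand : ((A - B) * (cfc f A - cfc f B)).trace
      = (cfc (fun x => x * f x) A * cfc (fun _ : ℝ => (1 : ℝ)) B).trace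
        - (cfc (fun x : ℝ => x) A * cfc f B).trace - (cfc f A * cfc (fun x : ℝ => x) B).trace
        + (cfc (fun _ : ℝ => (1 : ℝ)) A * cfc (fun x => x * f x) B).trace := by
    rw [cfc_mul (fun x => x) f A (hg := A.finite_real_spectrum.continuousOn f),
      cfc_mul (fun x => x) f B (hg := B.finite_real_spectrum.continuousOn f),
      cfc_const_one ℝ A, cfc_const_one ℝ B, cfc_id' ℝ A, cfc_id' ℝ B, Matrix.sub_mul,
      Matrix.mul_sub, Matrix.mul_sub, trace_mul_comm (cfc f A) B]
    simp only [trace_sub, Matrix.mul_one, Matrix.one_mul]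
    ring
  have hmono : MonovaryOn f id s := monovaryOn_id_iff.mpr hf
  rw [expand, trace_cfc_mul_cfc hA hB, trace_cfc_mul_cfc hA hB, trace_cfc_mul_cfc hA hB,
    trace_cfc_mul_cfc hA hB]
  calc (0 : ℂ) ≤ ((∑ i, ∑ j, (f (hA.eigenvalues i) - f (hB.eigenvalues j)) *
        (hA.eigenvalues i - hB.eigenvalues j) * hA.overlap hB i j : ℝ) : ℂ) := by
        refine Complex.zero_le_real.mpr (Finset.sum_nonneg fun i _ => Finset.sum_nonneg
          fun j _ => mul_nonneg ?_ (Complex.normSq_nonneg _))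
        exact hmono.sub_mul_sub_nonneg (hBs (hB.eigenvalues_mem_spectrum_real j))
          (hAs (hA.eigenvalues_mem_spectrum_real i))
    _ = _ := by
        push_cast
        simp only [← Finset.sum_sub_distrib, ← Finset.sum_add_distrib]
        exact Finset.sum_congr rfl fun i _ => Finset.sum_congr rfl fun j _ => by ring

end Matrix.IsHermitian

def gibbsState (H : Matrix n n ℂ) : Matrix n n ℂ :=
  (matExp H).trace⁻¹ • matExp H

namespace Matrix.IsHermitian

variable {H : Matrix n n ℂ}

lemma gibbsState_eq_cfc (hH : H.IsHermitian) :
    gibbsState H = cfc (fun x => Real.exp x / ∑ i, Real.exp (hH.eigenvalues i)) H := by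
  simp only [div_eq_inv_mul]
  rw [cfc_const_mul _ _ H (hf := H.finite_real_spectrum.continuousOn _), gibbsState, matExp,
    matFun_eq_cfc _ hH, hH.trace_cfc, ← Complex.ofReal_inv, Complex.coe_smul]

lemma isHermitian_gibbsState (hH : H.IsHermitian) : (gibbsState H).IsHermitian :=
  hH.gibbsState_eq_cfc ▸ cfc_predicate _ H

variable [Nonempty n]

lemma sum_exp_eigenvalues_pos (hH : H.IsHermitian) : 0 < ∑ i, Real.exp (hH.eigenvalues i) :=
  Finset.sum_pos (fun _ _ => Real.exp_pos _) Finset.univ_nonempty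

lemma spectrum_gibbsState_subset (hH : H.IsHermitian) :
    spectrum ℝ (gibbsState H) ⊆ Set.Ioi 0 := by
  rw [hH.gibbsState_eq_cfc, cfc_map_spectrum _ H]
  rintro - ⟨x, -, rfl⟩
  exact div_pos (Real.exp_pos x) hH.sum_exp_eigenvalues_pos

lemma trace_gibbsState (hH : H.IsHermitian) : (gibbsState H).trace = 1 := by
  rw [hH.gibbsState_eq_cfc, hH.trace_cfc, ← Finset.sum_div,
    div_self hH.sum_exp_eigenvalues_pos.ne', Complex.ofReal_one]

lemma matLog_gibbsState (hH : H.IsHermitian) :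
    matLog (gibbsState H) = H - (Real.log (∑ i, Real.exp (hH.eigenvalues i)) : ℂ) • 1 := by
  set Z := ∑ i, Real.exp (hH.eigenvalues i) with hZ
  have hlog (x : ℝ) : Real.log (Real.exp x / Z) = x - Real.log Z := by
    rw [Real.log_div (Real.exp_ne_zero x) hH.sum_exp_eigenvalues_pos.ne', Real.log_exp]
  rw [matLog, hH.gibbsState_eq_cfc, matFun_eq_cfc _ (cfc_predicate (R := ℝ) _ H),
    ← cfc_comp' Real.log _ H (Set.Finite.continuousOn (H.finite_real_spectrum.image _) _)]
  simp only [← hZ, hlog]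
  rw [cfc_sub (fun x => x) (fun _ => Real.log Z) H, cfc_id' ℝ H, cfc_const (Real.log Z) H,
    Algebra.algebraMap_eq_smul_one, Complex.coe_smul]

end Matrix.IsHermitian

namespace Matrix.PosDef

variable {σ H : Matrix n n ℂ}

lemma spectrum_subset_Ioi (hσ : σ.PosDef) : spectrum ℝ σ ⊆ Set.Ioi 0 := by
  rw [hσ.1.spectrum_real_eq_range_eigenvalues]
  rintro - ⟨i, rfl⟩
  exact hσ.eigenvalues_pos i

lemma trace_sub_gibbsState_mul_sub_nonneg (hσ : σ.PosDef) (hσ_tr : σ.trace = 1)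
    (hH : H.IsHermitian) : 0 ≤ ((σ - gibbsState H) * (matLog σ - H)).trace := by
  have : Nonempty n := by
    by_contra h
    simp [not_nonempty_iff.mp h, trace] at hσ_tr
  have hρ := hH.isHermitian_gibbsState
  have klein := hσ.1.trace_sub_mul_cfc_sub_nonneg hρ Real.strictMonoOn_log.monotoneOn
    hσ.spectrum_subset_Ioi hH.spectrum_gibbsState_subset
  rwa [← matFun_eq_cfc _ hσ.1, ← matFun_eq_cfc _ hρ, ← matLog, ← matLog, hH.matLog_gibbsState,
    sub_sub_eq_add_sub, add_sub_right_comm, Matrix.mul_add, trace_add, Matrix.mul_smul,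
    Matrix.mul_one, trace_smul, trace_sub, hσ_tr, hH.trace_gibbsState, sub_self, smul_zero,
    add_zero] at klein

end Matrix.PosDef

/-- The Gibbs perturbation decreases the expected value of `Π`:
`Tr(Πρ*) ≤ Tr(Πσ)` for `ρ* = exp(log σ − Π/β)/Tr exp(log σ − Π/β)`. -/
theorem stmt14 (σ Pm : Matrix n n ℂ) (hσ : IsDensity σ) (hσpd : σ.PosDef)
    (hPm : Pm.PosSemidef) (β : ℝ) (hβ : 0 < β) :
    let ρstar : Matrix n n ℂ :=
      ((matExp (matLog σ - (β : ℂ)⁻¹ • Pm)).trace)⁻¹ • matExp (matLog σ - (β : ℂ)⁻¹ • Pm)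
    (Pm * ρstar).trace ≤ (Pm * σ).trace := by
  intro ρstar
  have hH : (matLog σ - (β : ℂ)⁻¹ • Pm).IsHermitian :=
    (isHermitian_matFun _ σ).sub (hPm.1.smul (by simp [IsSelfAdjoint, Complex.conj_ofReal]))
  have key := hσpd.trace_sub_gibbsState_mul_sub_nonneg hσ.2 hH
  rw [sub_sub_cancel, Matrix.mul_smul, trace_smul, Matrix.sub_mul, trace_sub, trace_mul_comm σ,
    trace_mul_comm (gibbsState _)] at key
  exact sub_nonneg.mp (nonneg_of_smul_nonneg_of_pos_left key (by simpa using hβ))
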